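/- Let e_1,...,e_n be a ∇-parallel orthonormal frame for a flat metric connection ∇ with skew torsion T. Then the Riemannian curvature in this frame is R^g(e_i,e_j)e_k = −(1/4)[[e_i,e_j],e_k]. -/

import Mathlib

/-- An abstract calculus of vector fields on a Riemannian manifold: `C` is the ring of smooth
functions, `X` the `C`-module of vector fields, `g` the Riemannian metric, `D` the directional
derivative, `bracket` the Lie bracket and `lc` the Levi-Civita connection `∇^g`. -/
structure VectorFieldCalculus (C X : Type*) [CommRing C] [Algebra ℝ C]
    [AddCommGroup X] [Module C X] where
  g : X → X → C
  D : X → C → C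
  bracket : X → X → X
  lc : X → X → X
  g_symm : ∀ a b, g a b = g b a
  g_add_left : ∀ a b c, g (a + b) c = g a c + g b c
  g_smul_left : ∀ (f : C) a b, g (f • a) b = f * g a b
  g_definite : ∀ a, g a a = 0 → a = 0
  D_add : ∀ v f h, D v (f + h) = D v f + D v h
  D_mul : ∀ v f h, D v (f * h) = f * D v h + h * D v f
  D_algebraMap : ∀ v (r : ℝ), D v (algebraMap ℝ C r) = 0
  D_add_vec : ∀ v w f, D (v + w) f = D v f + D w f
  D_smul_vec : ∀ (f : C) v h, D (f • v) h = f * D v h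
  bracket_antisymm : ∀ a b, bracket a b = - bracket b a
  bracket_jacobi : ∀ a b c,
    bracket (bracket a b) c + bracket (bracket b c) a + bracket (bracket c a) b = 0
  bracket_D : ∀ a b f, D (bracket a b) f = D a (D b f) - D b (D a f)
  bracket_leibniz : ∀ a (f : C) b, bracket a (f • b) = D a f • b + f • bracket a b
  lc_add : ∀ z a b, lc z (a + b) = lc z a + lc z b
  lc_smul : ∀ z (f : C) a, lc z (f • a) = D z f • a + f • lc z a
  lc_add_vec : ∀ z w a, lc (z + w) a = lc z a + lc w a
  lc_smul_vec : ∀ (f : C) z a, lc (f • z) a = f • lc z a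
  lc_metric : ∀ z a b, D z (g a b) = g (lc z a) b + g a (lc z b)
  lc_torsion_free : ∀ a b, lc a b - lc b a = bracket a b

/-- A vector field `k` is Killing iff `⟨∇_v k, w⟩ + ⟨∇_w k, v⟩ = 0` for all `v, w`. -/
def VectorFieldCalculus.IsKilling {C X : Type*} [CommRing C] [Algebra ℝ C]
    [AddCommGroup X] [Module C X] (V : VectorFieldCalculus C X) (k : X) : Prop :=
  ∀ v w, V.g (V.lc v k) w + V.g (V.lc w k) v = 0

/-!
Parallelism of the frame gives `∇^g_X e_k = -(1/2) T(X, e_k)`, hence `[e_a, e_b] = -T(e_a, e_b)`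
and `∇^g_{e_a} e_b = (1/2)[e_a, e_b]`. Expanding `⟨R^g(e_i, e_j) e_k, e_l⟩` and
`⟨[[e_i, e_j], e_k], e_l⟩` with the metric property leaves derivatives of the structure constants
`⟨[e_a, e_b], e_c⟩` and pairings `⟨[e_a, e_b], [e_c, e_d]⟩`. The Jacobi identity, paired with `e_d`,
expresses a signed sum of three such derivatives by the cyclic sum of pairings; four instances of it
give exactly the combination of derivatives that occurs.
-/

theorem algebraMap_half_add_half (C : Type*) [CommRing C] [Algebra ℝ C] :
    algebraMap ℝ C (1/2) + algebraMap ℝ C (1/2) = 1 := by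
  rw [← map_add]; norm_num

namespace VectorFieldCalculus

variable {C X : Type*} [CommRing C] [Algebra ℝ C] [AddCommGroup X] [Module C X]
  (V : VectorFieldCalculus C X)

def gLeft (b : X) : X →+ C := AddMonoidHom.mk' (V.g · b) (V.g_add_left · · b)

theorem g_zero_left (b : X) : V.g 0 b = 0 := map_zero (V.gLeft b)

theorem g_neg_left (a b : X) : V.g (-a) b = -V.g a b := map_neg (V.gLeft b) a

theorem g_neg_right (a b : X) : V.g a (-b) = -V.g a b := by
  rw [V.g_symm, g_neg_left, V.g_symm]

theorem g_sub_left (a b c : X) : V.g (a - b) c = V.g a c - V.g b c := map_sub (V.gLeft c) a b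

theorem g_smul_right (f : C) (a b : X) : V.g a (f • b) = f * V.g a b := by
  rw [V.g_symm, V.g_smul_left, V.g_symm]

theorem D_neg (v : X) (f : C) : V.D v (-f) = -V.D v f :=
  map_neg (AddMonoidHom.mk' (V.D v) (V.D_add v)) f

theorem eq_of_forall_g_eq {a b : X} (h : ∀ c, V.g a c = V.g b c) : a = b :=
  sub_eq_zero.mp <| V.g_definite _ <| by rw [g_sub_left, h, sub_self]

theorem eq_of_forall_g_frame_eq {ι : Type*} [Fintype ι] {e : ι → X}
    (hspan : ∀ a, a = ∑ i, V.g a (e i) • e i) {a b : X} (h : ∀ l, V.g a (e l) = V.g b (e l)) :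
    a = b := by
  rw [hspan a, hspan b]
  simp only [h]

theorem lc_algebraMap_smul (z a : X) (r : ℝ) :
    V.lc z (algebraMap ℝ C r • a) = algebraMap ℝ C r • V.lc z a := by
  rw [V.lc_smul, V.D_algebraMap, zero_smul, zero_add]

theorem g_bracket (a b c : X) :
    V.g (V.bracket a b) c = V.g (V.lc a b) c - V.g (V.lc b a) c := by
  rw [← V.lc_torsion_free, g_sub_left]

theorem g_bracket_swap (a b c : X) : V.g (V.bracket b a) c = -V.g (V.bracket a b) c := by
  rw [V.bracket_antisymm, g_neg_left]

/-- The cyclic sum `σ_T(x, y, z, w)` of the paper, written with `[·,·]` in place of `T`. -/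
def bracketCyclicSum (x y z w : X) : C :=
  V.g (V.bracket x y) (V.bracket z w) + V.g (V.bracket y z) (V.bracket x w)
    + V.g (V.bracket z x) (V.bracket y w)

theorem bracketCyclicSum_cycle (x y z w : X) :
    V.bracketCyclicSum y z w x = -V.bracketCyclicSum x y z w := by
  unfold bracketCyclicSum
  conv_lhs => rw [V.bracket_antisymm w x, V.bracket_antisymm y x, V.bracket_antisymm w y]
  rw [g_neg_left, g_neg_right, g_neg_right, V.g_symm (V.bracket z w), V.g_symm (V.bracket y w)]
  ring

/-- `e` is parallel for the connection `∇^g + (1/2) t` with skew-symmetric torsion `t`. -/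
structure IsParallelFrame {ι : Type*} (t : X → X → X) (e : ι → X) : Prop where
  skew_left : ∀ a b c, V.g (t a b) c = -V.g (t b a) c
  skew_right : ∀ a b c, V.g (t a b) c = -V.g (t a c) b
  lc_frame : ∀ a m, V.lc a (e m) = -(algebraMap ℝ C (1/2) • t a (e m))

namespace IsParallelFrame

variable {V} {t : X → X → X} {ι : Type*} {e : ι → X}

theorem bracket_eq (hf : V.IsParallelFrame t e) (a b : ι) :
    V.bracket (e a) (e b) = -t (e a) (e b) := by
  refine V.eq_of_forall_g_eq fun c => ?_
  rw [g_bracket, hf.lc_frame, hf.lc_frame, g_neg_left, g_neg_left, g_neg_left, V.g_smul_left,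
    V.g_smul_left, hf.skew_left (e b)]
  linear_combination (-V.g (t (e a) (e b)) c) * algebraMap_half_add_half C

theorem lc_eq (hf : V.IsParallelFrame t e) (a b : ι) :
    V.lc (e a) (e b) = algebraMap ℝ C (1/2) • V.bracket (e a) (e b) := by
  rw [hf.bracket_eq, smul_neg, hf.lc_frame]

theorem g_lc (hf : V.IsParallelFrame t e) (x : X) (c d : ι) :
    V.g (V.lc x (e c)) (e d) = algebraMap ℝ C (1/2) * V.g x (V.bracket (e c) (e d)) := by
  rw [hf.lc_frame, g_neg_left, V.g_smul_left, hf.bracket_eq, V.g_symm x, g_neg_left,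
    hf.skew_left, hf.skew_right, neg_neg]
  ring

theorem g_bracket (hf : V.IsParallelFrame t e) (x : X) (c d : ι) :
    V.g (V.bracket x (e c)) (e d)
      = V.g x (V.bracket (e c) (e d)) - V.D (e c) (V.g x (e d)) := by
  have hmetric := V.lc_metric (e c) x (e d)
  rw [hf.lc_eq, g_smul_right] at hmetric
  rw [VectorFieldCalculus.g_bracket, hf.g_lc]
  linear_combination hmetric + V.g x (V.bracket (e c) (e d)) * algebraMap_half_add_half C

theorem g_bracket_antisymm (hf : V.IsParallelFrame t e) (a b c : ι) :
    V.g (V.bracket (e a) (e c)) (e b) = -V.g (V.bracket (e a) (e b)) (e c) := by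
  rw [hf.bracket_eq, hf.bracket_eq, g_neg_left, g_neg_left, hf.skew_right]

theorem g_bracket_cycle (hf : V.IsParallelFrame t e) (a b c : ι) :
    V.g (V.bracket (e b) (e c)) (e a) = V.g (V.bracket (e a) (e b)) (e c) := by
  rw [hf.g_bracket_antisymm, g_bracket_swap, neg_neg]

theorem jacobi (hf : V.IsParallelFrame t e) (a b c d : ι) :
    V.D (e a) (V.g (V.bracket (e b) (e c)) (e d)) - V.D (e b) (V.g (V.bracket (e c) (e d)) (e a))
        + V.D (e c) (V.g (V.bracket (e d) (e a)) (e b))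
      = V.bracketCyclicSum (e a) (e b) (e c) (e d) := by
  have h := congrArg (V.g · (e d)) (V.bracket_jacobi (e a) (e b) (e c))
  simp only [V.g_add_left, g_zero_left, hf.g_bracket (V.bracket _ _)] at h
  rw [hf.g_bracket_antisymm c a d, D_neg, ← hf.g_bracket_cycle d a b]
  unfold bracketCyclicSum
  linear_combination -h

theorem jacobi_combination (hf : V.IsParallelFrame t e) (i j k l : ι) :
    2 * V.D (e i) (V.g (V.bracket (e j) (e k)) (e l))
        - 2 * V.D (e j) (V.g (V.bracket (e i) (e k)) (e l))
        - V.D (e k) (V.g (V.bracket (e i) (e j)) (e l))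
      = V.g (V.bracket (e i) (e j)) (V.bracket (e k) (e l))
        + V.g (V.bracket (e j) (e k)) (V.bracket (e i) (e l))
        - V.g (V.bracket (e i) (e k)) (V.bracket (e j) (e l)) := by
  have hσ : V.bracketCyclicSum (e i) (e j) (e k) (e l)
      = V.g (V.bracket (e i) (e j)) (V.bracket (e k) (e l))
        + V.g (V.bracket (e j) (e k)) (V.bracket (e i) (e l))
        - V.g (V.bracket (e i) (e k)) (V.bracket (e j) (e l)) := by
    rw [bracketCyclicSum, V.g_bracket_swap (e i) (e k)]; ring
  rw [← hσ, ← hf.g_bracket_cycle i k l, hf.g_bracket_cycle l i j]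
  linear_combination hf.jacobi i j k l + hf.jacobi j k l i - hf.jacobi k l i j
    - 2 * hf.jacobi l i j k + V.bracketCyclicSum_cycle (e j) (e k) (e l) (e i)
    - 2 * V.bracketCyclicSum_cycle (e k) (e l) (e i) (e j)

theorem g_lc_lc (hf : V.IsParallelFrame t e) (a b c d : ι) :
    V.g (V.lc (e a) (V.lc (e b) (e c))) (e d)
      = algebraMap ℝ C (1/2) * V.D (e a) (V.g (V.bracket (e b) (e c)) (e d))
        - algebraMap ℝ C (1/2) * algebraMap ℝ C (1/2)
          * V.g (V.bracket (e b) (e c)) (V.bracket (e a) (e d)) := by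
  have hmetric := V.lc_metric (e a) (V.bracket (e b) (e c)) (e d)
  rw [hf.lc_eq a d, g_smul_right] at hmetric
  rw [hf.lc_eq b c, lc_algebraMap_smul, V.g_smul_left]
  linear_combination -algebraMap ℝ C (1/2) * hmetric

end IsParallelFrame

end VectorFieldCalculus

theorem curvature_in_parallel_frame_general {C X : Type*} [CommRing C] [Algebra ℝ C]
    [AddCommGroup X] [Module C X] {n : ℕ}
    (V : VectorFieldCalculus C X)
    (t : X → X → X)
    (hskew1 : ∀ a b c, V.g (t a b) c = - V.g (t b a) c)
    (hskew2 : ∀ a b c, V.g (t a b) c = - V.g (t a c) b)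
    (nab : X → X → X)
    (hnab : ∀ a b, nab a b = V.lc a b + algebraMap ℝ C (1/2) • t a b)
    (e : Fin n → X)
    (hspan : ∀ a, a = ∑ i, V.g a (e i) • e i)
    (hpar : ∀ i a, nab a (e i) = 0)
    (Rg : X → X → X → X)
    (hRg : ∀ a b c, Rg a b c =
      V.lc a (V.lc b c) - V.lc b (V.lc a c) - V.lc (V.bracket a b) c)
    (i j k : Fin n) :
    Rg (e i) (e j) (e k)
      = algebraMap ℝ C (-(1/4)) • V.bracket (V.bracket (e i) (e j)) (e k) := by
  have hf : V.IsParallelFrame t e :=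
    { skew_left := hskew1
      skew_right := hskew2
      lc_frame := fun a m => eq_neg_of_add_eq_zero_left ((hnab a (e m)).symm.trans (hpar m a)) }
  have hquarter : algebraMap ℝ C (-(1/4)) = -(algebraMap ℝ C (1/2) * algebraMap ℝ C (1/2)) := by
    rw [← map_mul, ← map_neg]; norm_num
  refine V.eq_of_forall_g_frame_eq hspan fun l => ?_
  rw [hRg, V.g_sub_left, V.g_sub_left, hf.g_lc_lc, hf.g_lc_lc, hf.g_lc, V.g_smul_left, hquarter,
    hf.g_bracket (V.bracket (e i) (e j))]
  have hcomb := hf.jacobi_combination i j k l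
  have hhalf := algebraMap_half_add_half C
  set h := algebraMap ℝ C (1/2)
  linear_combination h * h * hcomb - h * (V.D (e i) (V.g (V.bracket (e j) (e k)) (e l))
      - V.D (e j) (V.g (V.bracket (e i) (e k)) (e l))
      - V.g (V.bracket (e i) (e j)) (V.bracket (e k) (e l))) * hhalf

/-- For a `∇`-parallel orthonormal frame `e i` of a flat metric connection
`∇ = ∇^g + (1/2)T` with skew torsion, the Riemannian curvature is
`R^g(e i, e j) e k = -(1/4)[[e i, e j], e k]`. -/
theorem curvature_in_parallel_frame {C X : Type*} [CommRing C] [Algebra ℝ C]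
    [AddCommGroup X] [Module C X] {n : ℕ}
    (V : VectorFieldCalculus C X)
    (t : X → X → X)
    (hskew1 : ∀ a b c, V.g (t a b) c = - V.g (t b a) c)
    (hskew2 : ∀ a b c, V.g (t a b) c = - V.g (t a c) b)
    (nab : X → X → X)
    (hnab : ∀ a b, nab a b = V.lc a b + algebraMap ℝ C (1/2) • t a b)
    (hflat : ∀ a b c, nab a (nab b c) - nab b (nab a c) - nab (V.bracket a b) c = 0)
    (e : Fin n → X)
    (horth : ∀ i j, V.g (e i) (e j) = if i = j then 1 else 0)
    (hspan : ∀ a, a = ∑ i, V.g a (e i) • e i)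
    (hpar : ∀ i a, nab a (e i) = 0)
    (Rg : X → X → X → X)
    (hRg : ∀ a b c, Rg a b c =
      V.lc a (V.lc b c) - V.lc b (V.lc a c) - V.lc (V.bracket a b) c)
    (i j k : Fin n) :
    Rg (e i) (e j) (e k)
      = algebraMap ℝ C (-(1/4)) • V.bracket (V.bracket (e i) (e j)) (e k) :=
  curvature_in_parallel_frame_general V t hskew1 hskew2 nab hnab e hspan hpar Rg hRg i j k
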